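/- If F and G are SVN-filters over U such that every F ∈ F and G ∈ G satisfy F ⊓ G ≠ ∅, then F ∨ G = { F ⊓ G : F ∈ F, G ∈ G } is an SVN-filter finer than both, i.e. F ⊆ F ∨ G and G ⊆ F ∨ G. -/
import Mathlib



noncomputable section
open scoped Classical

instance : Fact ((0:ℝ) ≤ 1) := ⟨zero_le_one⟩
instance : CompleteLattice unitInterval := Set.Icc.completeLattice

structure SVNS (U : Type*) where
  T : U → unitInterval
  I : U → unitInterval
  F : U → unitInterval

namespace SVNS

variable {U V : Type*}

/-- Neutrosophic subset relation. -/
def le (A B : SVNS U) : Prop :=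
  (∀ u, A.T u ≤ B.T u) ∧ (∀ u, A.I u ≤ B.I u) ∧ (∀ u, B.F u ≤ A.F u)

def inter (A B : SVNS U) : SVNS U :=
  ⟨fun u => A.T u ⊓ B.T u, fun u => A.I u ⊓ B.I u, fun u => A.F u ⊔ B.F u⟩

def union (A B : SVNS U) : SVNS U :=
  ⟨fun u => A.T u ⊔ B.T u, fun u => A.I u ⊔ B.I u, fun u => A.F u ⊓ B.F u⟩

def compl (A : SVNS U) : SVNS U :=
  ⟨A.F, fun u => unitInterval.symm (A.I u), A.T⟩

def empty : SVNS U := ⟨fun _ => 0, fun _ => 0, fun _ => 1⟩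

def iUnion {ι : Type*} (A : ι → SVNS U) : SVNS U :=
  ⟨fun u => ⨆ i, (A i).T u, fun u => ⨆ i, (A i).I u, fun u => ⨅ i, (A i).F u⟩

def iInter {ι : Type*} (A : ι → SVNS U) : SVNS U :=
  ⟨fun u => ⨅ i, (A i).T u, fun u => ⨅ i, (A i).I u, fun u => ⨆ i, (A i).F u⟩

def preimage (f : U → V) (B : SVNS V) : SVNS U :=
  ⟨fun u => B.T (f u), fun u => B.I (f u), fun u => B.F (f u)⟩

def image (f : U → V) (A : SVNS U) : SVNS V :=
  ⟨fun v => if ∃ u, f u = v then ⨅ u : {u // f u = v}, A.T u.1 else 0,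
   fun v => if ∃ u, f u = v then ⨅ u : {u // f u = v}, A.I u.1 else 0,
   fun v => if ∃ u, f u = v then ⨆ u : {u // f u = v}, A.F u.1 else 1⟩

/-- SVN-filter base. -/
def IsFilterBase (F : Set (SVNS U)) : Prop :=
  F.Nonempty ∧ empty ∉ F ∧
    ∀ A ∈ F, ∀ B ∈ F, ∃ H ∈ F, le H (inter A B)

/-- SVN-filter. -/
def IsFilter (F : Set (SVNS U)) : Prop :=
  IsFilterBase F ∧ ∀ A ∈ F, ∀ B : SVNS U, le A B → B ∈ F

/-- The set of all finite neutrosophic intersections of members of `S`. -/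
def finInters (S : Set (SVNS U)) : Set (SVNS U) :=
  {A | ∃ (n : ℕ) (g : Fin (n + 1) → SVNS U), (∀ i, g i ∈ S) ∧ A = iInter g}

/-- Finite intersection property. -/
def FIP (S : Set (SVNS U)) : Prop :=
  ∀ (n : ℕ) (g : Fin (n + 1) → SVNS U), (∀ i, g i ∈ S) → iInter g ≠ empty

/-- The neutrosophic filter completion. -/
def completion (F : Set (SVNS U)) : Set (SVNS U) :=
  {A | ∃ B ∈ F, le B A}

/-- Neutrosophic intersection of all members of a family of SVNS. -/
def sInterNS (S : Set (SVNS U)) : SVNS U :=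
  ⟨fun u => ⨅ A : S, A.1.T u, fun u => ⨅ A : S, A.1.I u, fun u => ⨆ A : S, A.1.F u⟩

end SVNS

open SVNS

theorem SVNS.ext' {U : Type*} {A B : SVNS U}
    (hT : ∀ u, A.T u = B.T u) (hI : ∀ u, A.I u = B.I u) (hF : ∀ u, A.F u = B.F u) :
    A = B := by
  cases A; cases B
  simp only [SVNS.mk.injEq]
  exact ⟨funext hT, funext hI, funext hF⟩

theorem svns_le_refl {U : Type*} (A : SVNS U) : le A A :=
  ⟨fun _ => le_rfl, fun _ => le_rfl, fun _ => le_rfl⟩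

theorem unitInterval.inf_sup_cancel {a b d : unitInterval} (h : a ⊓ b ≤ d) :
    (a ⊔ d) ⊓ (b ⊔ d) = d := by
  apply le_antisymm
  · rcases le_total a b with hab | hab
    · have : a ≤ d := le_trans (le_of_eq (inf_eq_left.2 hab).symm) h
      calc (a ⊔ d) ⊓ (b ⊔ d) ≤ a ⊔ d := inf_le_left
        _ = d := sup_eq_right.2 this
    · have : b ≤ d := le_trans (le_of_eq (inf_eq_right.2 hab).symm) h
      calc (a ⊔ d) ⊓ (b ⊔ d) ≤ b ⊔ d := inf_le_right
        _ = d := sup_eq_right.2 this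
  · exact le_inf le_sup_right le_sup_right

theorem unitInterval.sup_inf_cancel {a b d : unitInterval} (h : d ≤ a ⊔ b) :
    (a ⊓ d) ⊔ (b ⊓ d) = d := by
  apply le_antisymm
  · exact sup_le inf_le_right inf_le_right
  · rcases le_total a b with hab | hab
    · have : d ≤ b := le_trans h (le_of_eq (sup_eq_right.2 hab))
      calc d = b ⊓ d := (inf_eq_right.2 this).symm
        _ ≤ (a ⊓ d) ⊔ (b ⊓ d) := le_sup_right
    · have : d ≤ a := le_trans h (le_of_eq (sup_eq_left.2 hab))
      calc d = a ⊓ d := (inf_eq_right.2 this).symm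
        _ ≤ (a ⊓ d) ⊔ (b ⊓ d) := le_sup_left

theorem svns_filter_inter_mem {U : Type*} {F : Set (SVNS U)} (hF : IsFilter F)
    {A B : SVNS U} (hA : A ∈ F) (hB : B ∈ F) : inter A B ∈ F := by
  obtain ⟨H, hH, hle⟩ := hF.1.2.2 A hA B hB
  exact hF.2 H hH _ hle

theorem svns_sup_filters {U : Type*} (F G : Set (SVNS U))
    (hF : IsFilter F) (hG : IsFilter G)
    (hmeet : ∀ A ∈ F, ∀ B ∈ G, inter A B ≠ empty) :
    IsFilter {C : SVNS U | ∃ A ∈ F, ∃ B ∈ G, C = inter A B} ∧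
    F ⊆ {C : SVNS U | ∃ A ∈ F, ∃ B ∈ G, C = inter A B} ∧
    G ⊆ {C : SVNS U | ∃ A ∈ F, ∃ B ∈ G, C = inter A B}  := by
  set S := {C : SVNS U | ∃ A ∈ F, ∃ B ∈ G, C = inter A B} with hS
  obtain ⟨A0, hA0⟩ := hF.1.1
  obtain ⟨B0, hB0⟩ := hG.1.1
  have hFsub : F ⊆ S := by
    intro A hA
    refine ⟨A, hA, union A B0, hG.2 B0 hB0 _ ⟨fun u => le_sup_right, fun u => le_sup_right, fun u => inf_le_right⟩, ?_⟩
    exact SVNS.ext' (fun u => (inf_sup_self).symm) (fun u => (inf_sup_self).symm)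
      (fun u => (sup_inf_self).symm)
  have hGsub : G ⊆ S := by
    intro B hB
    refine ⟨union B A0, hF.2 A0 hA0 _ ⟨fun u => le_sup_right, fun u => le_sup_right, fun u => inf_le_right⟩, B, hB, ?_⟩
    refine SVNS.ext' (fun u => ?_) (fun u => ?_) (fun u => ?_)
    · exact (inf_eq_right.2 (le_sup_left)).symm
    · exact (inf_eq_right.2 (le_sup_left)).symm
    · exact (sup_eq_right.2 (inf_le_left)).symm
  refine ⟨⟨⟨⟨inter A0 B0, A0, hA0, B0, hB0, rfl⟩, ?_, ?_⟩, ?_⟩, hFsub, hGsub⟩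
  · rintro ⟨A, hA, B, hB, hCE⟩
    exact hmeet A hA B hB hCE.symm
  · rintro C ⟨A, hA, B, hB, rfl⟩ C' ⟨A', hA', B', hB', rfl⟩
    refine ⟨inter (inter A A') (inter B B'),
      ⟨inter A A', svns_filter_inter_mem hF hA hA', inter B B',
        svns_filter_inter_mem hG hB hB', rfl⟩, ?_⟩
    have hkey : inter (inter A A') (inter B B') = inter (inter A B) (inter A' B') := by
      refine SVNS.ext' (fun u => ?_) (fun u => ?_) (fun u => ?_)
      · exact inf_inf_inf_comm _ _ _ _
      · exact inf_inf_inf_comm _ _ _ _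
      · exact sup_sup_sup_comm _ _ _ _
    rw [hkey]
    exact svns_le_refl _
  · rintro C ⟨A, hA, B, hB, rfl⟩ D ⟨hT, hI, hFle⟩
    refine ⟨union A D, hF.2 A hA _ ⟨fun u => le_sup_left, fun u => le_sup_left, fun u => inf_le_left⟩,
      union B D, hG.2 B hB _ ⟨fun u => le_sup_left, fun u => le_sup_left, fun u => inf_le_left⟩, ?_⟩
    refine SVNS.ext' (fun u => ?_) (fun u => ?_) (fun u => ?_)
    · exact (unitInterval.inf_sup_cancel (hT u)).symm
    · exact (unitInterval.inf_sup_cancel (hI u)).symm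
    · exact (unitInterval.sup_inf_cancel (hFle u)).symm
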